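/- arXiv:2206.08086 — 6 statements merged into one kernel-verified Lean document; each statement's English description precedes it below -/
import Mathlib

section
/- Let x_1,…,x_N be unit vectors in ℝ³ with x_i ≠ ±x_j whenever i ≠ j. Then the 2N vectors x_1,…,x_N,−x_1,…,−x_N are distinct and E^P_log(x_1,…,x_N) = (1/2)·E_log({x_1,…,x_N} ∪ {−x_1,…,−x_N}) + N²·log 2. -/
/-! For unit vectors `u, v` one has `‖u - v‖² ‖u + v‖² = (2 - 2⟪u, v⟫)(2 + 2⟪u, v⟫) = 4 (1 - ⟪u, v⟫²)`,
so the projective interaction `-log √(1 - ⟪u, v⟫²)` is the sum of the spherical interactions of `u`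
with `v` and with `-v`, plus `log 2`. In the spherical energy of the antipodal configuration each of
these interactions occurs twice, and the cross terms also contain the `2N` pairs `(±x_i, ∓x_i)` at
distance `2`; halving and collecting the constants gives the identity. -/

open scoped Real RealInnerProductSpace Classical

noncomputable section

/-- Points of `ℝ³` (unit vectors represent points of `S²` and of `RP²`). -/
abbrev Esp := EuclideanSpace ℝ (Fin 3)

/-- Logarithmic energy of a finite set of points: sum over ordered pairs of
distinct points of `log (1/‖x - y‖)`. -/
def Elog (ω : Finset Esp) : ℝ :=
  ∑ x ∈ ω, ∑ y ∈ ω, if x = y then 0 else Real.log (1 / ‖x - y‖)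

/-- Projective logarithmic energy of `x₁,…,x_N`:
`-∑_{i ≠ j} log √(1 - ⟨x_i, x_j⟩²)` over ordered pairs of distinct indices. -/
def EPlog {N : ℕ} (x : Fin N → Esp) : ℝ :=
  -∑ i, ∑ j, if i = j then 0 else Real.log (Real.sqrt (1 - ⟪x i, x j⟫^2))

open Finset

section OffDiagSum

variable {ι κ M : Type*} [Fintype ι] [DecidableEq ι] [Fintype κ] [DecidableEq κ] [AddCommMonoid M]

def offDiagSum (g : ι → ι → M) : M :=
  ∑ i, ∑ j, if i = j then 0 else g i j

theorem sum_sum_eq_offDiagSum_add (g : ι → ι → M) :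
    ∑ i, ∑ j, g i j = offDiagSum g + ∑ i, g i i := by
  simp only [offDiagSum, ← sum_add_distrib]
  refine sum_congr rfl fun i _ => ?_
  have hsplit : ∀ j, g i j = (if i = j then 0 else g i j) + if i = j then g i j else 0 := by
    intro j; split_ifs <;> simp
  rw [sum_congr rfl fun j _ => hsplit j, sum_add_distrib, sum_ite_eq, if_pos (mem_univ i)]

theorem offDiagSum_congr {g h : ι → ι → M} (hgh : ∀ i j, i ≠ j → g i j = h i j) :
    offDiagSum g = offDiagSum h :=
  sum_congr rfl fun i _ => sum_congr rfl fun j _ => by split_ifs with hij <;> simp [hgh i j, hij]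

theorem offDiagSum_add (g h : ι → ι → M) :
    offDiagSum (fun i j => g i j + h i j) = offDiagSum g + offDiagSum h := by
  simp only [offDiagSum, ← sum_add_distrib]
  refine sum_congr rfl fun i _ => sum_congr rfl fun j _ => ?_
  split_ifs <;> simp

theorem offDiagSum_const (c : ℝ) :
    offDiagSum (fun (_ : ι) (_ : ι) => c) = ((Fintype.card ι : ℝ) ^ 2 - Fintype.card ι) * c := by
  have h := sum_sum_eq_offDiagSum_add (fun (_ : ι) (_ : ι) => c)
  simp only [sum_const, card_univ, nsmul_eq_mul] at h
  linarith

theorem offDiagSum_sum_type (g : ι ⊕ κ → ι ⊕ κ → M) :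
    offDiagSum g = offDiagSum (fun i j => g (.inl i) (.inl j)) + ∑ i, ∑ j, g (.inl i) (.inr j)
      + ∑ i, ∑ j, g (.inr i) (.inl j) + offDiagSum (fun i j => g (.inr i) (.inr j)) := by
  simp only [offDiagSum, Fintype.sum_sum_type, Sum.inl.injEq, Sum.inr.injEq, reduceCtorEq,
    if_false, sum_add_distrib]
  abel

end OffDiagSum

theorem Elog_image {ι : Type*} [Fintype ι] [DecidableEq ι] {f : ι → Esp}
    (hf : Function.Injective f) :
    Elog (univ.image f) = offDiagSum fun a b => Real.log (1 / ‖f a - f b‖) := by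
  simp only [Elog, sum_image hf.injOn, offDiagSum, hf.eq_iff]

section InnerProductSpace

variable {E : Type*} [NormedAddCommGroup E] [InnerProductSpace ℝ E]

theorem norm_sub_mul_norm_add_of_norm_eq_one {u v : E} (hu : ‖u‖ = 1) (hv : ‖v‖ = 1) :
    ‖u - v‖ * ‖u + v‖ = 2 * √(1 - ⟪u, v⟫ ^ 2) := by
  have hinner : |⟪u, v⟫| ≤ 1 := by simpa [hu, hv] using abs_real_inner_le_norm u v
  have hnonneg : 0 ≤ 1 - ⟪u, v⟫ ^ 2 := sub_nonneg.mpr ((sq_le_one_iff_abs_le_one _).mpr hinner)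
  rw [← pow_left_inj₀ (by positivity) (by positivity) two_ne_zero, mul_pow, mul_pow,
    norm_sub_sq_real, norm_add_sq_real, hu, hv, Real.sq_sqrt hnonneg]
  ring

theorem neg_log_sqrt_one_sub_inner_sq {u v : E} (hu : ‖u‖ = 1) (hv : ‖v‖ = 1) (hne : u ≠ v)
    (hne_neg : u ≠ -v) :
    -Real.log √(1 - ⟪u, v⟫ ^ 2) = Real.log (1 / ‖u - v‖) + Real.log (1 / ‖u + v‖) + Real.log 2 := by
  have hsub : ‖u - v‖ ≠ 0 := norm_ne_zero_iff.mpr (sub_ne_zero.mpr hne)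
  have hadd : ‖u + v‖ ≠ 0 := norm_ne_zero_iff.mpr fun h => hne_neg (eq_neg_of_add_eq_zero_left h)
  have hsqrt : √(1 - ⟪u, v⟫ ^ 2) = ‖u - v‖ * ‖u + v‖ / 2 := by
    rw [norm_sub_mul_norm_add_of_norm_eq_one hu hv]; ring
  rw [hsqrt, Real.log_div (mul_ne_zero hsub hadd) two_ne_zero, Real.log_mul hsub hadd,
    one_div, one_div, Real.log_inv, Real.log_inv]
  ring

end InnerProductSpace

theorem injective_sum_elim_neg {ι G : Type*} [AddGroup G] [IsAddTorsionFree G] {x : ι → G}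
    (hx : ∀ i, x i ≠ 0) (hdist : ∀ i j, i ≠ j → x i ≠ x j ∧ x i ≠ -x j) :
    Function.Injective (Sum.elim x fun i => -x i) := by
  have hne_neg : ∀ i j, x i ≠ -x j := by
    intro i j h
    obtain rfl | hij := eq_or_ne i j
    · exact hx i (self_eq_neg.mp h)
    · exact (hdist i j hij).2 h
  rintro (i | i) (j | j) h <;> simp only [Sum.elim_inl, Sum.elim_inr, neg_inj] at h
  · obtain rfl | hij := eq_or_ne i j
    · rfl
    · exact absurd h (hdist i j hij).1
  · exact absurd h (hne_neg i j)
  · exact absurd h.symm (hne_neg j i)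
  · obtain rfl | hij := eq_or_ne i j
    · rfl
    · exact absurd h (hdist i j hij).1

theorem EPlog_eq_offDiagSum_add {N : ℕ} {x : Fin N → Esp} (hx : ∀ i, ‖x i‖ = 1)
    (hdist : ∀ i j, i ≠ j → x i ≠ x j ∧ x i ≠ -x j) :
    EPlog x = (offDiagSum fun i j => Real.log (1 / ‖x i - x j‖))
      + (offDiagSum fun i j => Real.log (1 / ‖x i + x j‖)) + ((N : ℝ) ^ 2 - N) * Real.log 2 := by
  have hneg : EPlog x = offDiagSum fun i j => -Real.log √(1 - ⟪x i, x j⟫ ^ 2) := by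
    simp only [EPlog, offDiagSum, ← sum_neg_distrib, neg_ite, neg_zero]
  rw [hneg, offDiagSum_congr fun i j hij =>
    neg_log_sqrt_one_sub_inner_sq (hx i) (hx j) (hdist i j hij).1 (hdist i j hij).2,
    offDiagSum_add, offDiagSum_add, offDiagSum_const, Fintype.card_fin]

theorem Elog_image_union_image_neg {ι : Type*} [Fintype ι] [DecidableEq ι] {x : ι → Esp}
    (hx : ∀ i, ‖x i‖ = 1) (hinj : Function.Injective (Sum.elim x fun i => -x i)) :
    Elog (univ.image x ∪ univ.image fun i => -x i)
      = 2 * (offDiagSum fun i j => Real.log (1 / ‖x i - x j‖))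
        + 2 * (offDiagSum fun i j => Real.log (1 / ‖x i + x j‖))
        - 2 * Fintype.card ι * Real.log 2 := by
  have hunion : univ.image x ∪ univ.image (fun i => -x i)
      = univ.image (Sum.elim x fun i => -x i) := by
    ext v; simp [Sum.exists]
  have hdiag : ∀ i, Real.log (1 / ‖x i + x i‖) = -Real.log 2 := fun i => by
    rw [← two_smul ℝ (x i), norm_smul, hx i, one_div, Real.log_inv]; norm_num
  have hanti : ∀ i j, ‖-x i - -x j‖ = ‖x i - x j‖ := fun i j => by rw [← neg_sub', norm_neg]
  rw [hunion, Elog_image hinj, offDiagSum_sum_type]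
  simp only [Sum.elim_inl, Sum.elim_inr, hanti]
  simp only [sub_neg_eq_add, ← neg_add', norm_neg, sum_sum_eq_offDiagSum_add, hdiag, sum_const,
    card_univ, nsmul_eq_mul]
  ring

/-- If `x₁,…,x_N` are unit vectors with `x_i ≠ ±x_j` for `i ≠ j`, then the `2N` vectors
`x₁,…,x_N, -x₁,…,-x_N` are distinct and
`E^P_log(x₁,…,x_N) = (1/2)·E_log({x₁,…,x_N} ∪ {-x₁,…,-x_N}) + N²·log 2`. -/
theorem projective_energy_eq_half_spherical_energy
    (N : ℕ) (x : Fin N → Esp) (hx : ∀ i, ‖x i‖ = 1)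
    (hdist : ∀ i j, i ≠ j → x i ≠ x j ∧ x i ≠ -x j) :
    Function.Injective (Sum.elim x (fun i => -x i) : Fin N ⊕ Fin N → Esp) ∧
    EPlog x = (1/2) * Elog ((Finset.univ.image x) ∪ (Finset.univ.image fun i => -x i))
      + (N:ℝ)^2 * Real.log 2 := by
  have := IsAddTorsionFree.of_isTorsionFree ℝ Esp
  have hinj := injective_sum_elim_neg (fun i => norm_ne_zero_iff.mp (hx i ▸ one_ne_zero)) hdist
  refine ⟨hinj, ?_⟩
  rw [EPlog_eq_offDiagSum_add hx hdist, Elog_image_union_image_neg hx hinj, Fintype.card_fin]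
  ring
end
end

section
/- For every integer N ≥ 1, let m_{2N} denote the minimum of E_log over all sets of 2N distinct points on the unit sphere S². Then for every collection x_1,…,x_N of unit vectors in ℝ³ with x_i ≠ ±x_j whenever i ≠ j, one has E^P_log(x_1,…,x_N) ≥ (1/2)·m_{2N} + N²·log 2. -/
/-!
Replace the projective configuration `x₁, …, x_N` by the `2N` antipodal points `±x_i` on `S²`.
For unit vectors `√(1 - ⟨a, b⟩²) = ‖a - b‖ ‖a + b‖ / 2`, and the four distances between `±a`
and `±b` are `‖a - b‖` and `‖a + b‖`, each taken twice; hence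
`E_log(±x) = 2 E^P_log(x) - 2N² log 2`, and `m_{2N} ≤ E_log(±x)` gives the bound.
-/

open scoped Real RealInnerProductSpace Classical

noncomputable section

/-- `m_{2N}`: the minimum of the logarithmic energy over all sets of `2N` distinct
points on the unit sphere. -/
def minEnergy (n : ℕ) : ℝ :=
  sInf {e : ℝ | ∃ ω : Finset Esp, ω.card = n ∧ (∀ p ∈ ω, ‖p‖ = 1) ∧ e = Elog ω}

section UnitVectors

variable {E : Type*} [NormedAddCommGroup E] [InnerProductSpace ℝ E]

theorem sqrt_one_sub_inner_sq_eq {a b : E} (ha : ‖a‖ = 1) (hb : ‖b‖ = 1) :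
    √(1 - ⟪a, b⟫ ^ 2) = ‖a - b‖ * ‖a + b‖ / 2 := by
  have hsub : ‖a - b‖ ^ 2 = 2 - 2 * ⟪a, b⟫ := by rw [norm_sub_sq_real, ha, hb]; ring
  have hadd : ‖a + b‖ ^ 2 = 2 + 2 * ⟪a, b⟫ := by rw [norm_add_sq_real, ha, hb]; ring
  have hsq : 1 - ⟪a, b⟫ ^ 2 = (‖a - b‖ * ‖a + b‖ / 2) ^ 2 := by
    rw [div_pow, mul_pow, hsub, hadd]; ring
  rw [hsq, Real.sqrt_sq (by positivity)]

/-- If `b = ±a`, one of the norms is `0` and the other `2`, and both sides vanish since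
`log 0 = 0`. -/
theorem log_sqrt_one_sub_inner_sq_eq {a b : E} (ha : ‖a‖ = 1) (hb : ‖b‖ = 1) :
    Real.log √(1 - ⟪a, b⟫ ^ 2) = Real.log ‖a - b‖ + Real.log ‖a + b‖ - Real.log 2 := by
  have hpar := parallelogram_law_with_norm ℝ a b
  rw [ha, hb] at hpar
  rw [sqrt_one_sub_inner_sq_eq ha hb]
  by_cases hsub : ‖a - b‖ = 0
  · have hadd : ‖a + b‖ = 2 := by nlinarith [norm_nonneg (a + b)]
    simp [hsub, hadd]
  by_cases hadd : ‖a + b‖ = 0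
  · have hsub' : ‖a - b‖ = 2 := by nlinarith [norm_nonneg (a - b)]
    simp [hadd, hsub']
  rw [Real.log_div (mul_ne_zero hsub hadd) two_ne_zero, Real.log_mul hsub hadd]

end UnitVectors

section AntipodalDouble

variable {ι E : Type*}

def antipodalDouble [Neg E] (x : ι → E) : ι × Bool → E :=
  fun p => if p.2 then x p.1 else -x p.1

theorem antipodalDouble_injective [AddCommGroup E] [Module ℝ E] {x : ι → E} (hx : ∀ i, x i ≠ 0)
    (hdist : ∀ i j, i ≠ j → x i ≠ x j ∧ x i ≠ -x j) :
    (antipodalDouble x).Injective := by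
  have hne_neg : ∀ i j, x i ≠ -x j := by
    intro i j h
    by_cases hij : i = j
    · subst hij
      have htwo : (2 : ℝ) • x i = 0 := by rw [two_smul]; nth_rewrite 2 [h]; exact add_neg_cancel _
      exact hx i ((smul_eq_zero.mp htwo).resolve_left two_ne_zero)
    · exact (hdist i j hij).2 h
  have hinj : ∀ i j, x i = x j → i = j := fun i j h => by
    by_contra hij
    exact (hdist i j hij).1 h
  rintro ⟨i, _ | _⟩ ⟨j, _ | _⟩ h <;> simp only [antipodalDouble, Bool.false_eq_true,
    if_false, if_true, neg_inj] at h
  · rw [hinj i j h]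
  · exact (hne_neg j i h.symm).elim
  · exact (hne_neg i j h).elim
  · rw [hinj i j h]

variable [NormedAddCommGroup E]

theorem norm_antipodalDouble (x : ι → E) (p : ι × Bool) :
    ‖antipodalDouble x p‖ = ‖x p.1‖ := by
  unfold antipodalDouble
  split_ifs <;> simp only [norm_neg]

variable [Fintype ι]

theorem sum_log_norm_sub_antipodalDouble (x : ι → E) :
    ∑ p, ∑ q, Real.log ‖antipodalDouble x p - antipodalDouble x q‖ =
      2 * ∑ i, ∑ j, (Real.log ‖x i - x j‖ + Real.log ‖x i + x j‖) := by
  simp only [Fintype.sum_prod_type, Fintype.sum_bool, antipodalDouble, Finset.mul_sum,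
    ← Finset.sum_add_distrib, if_true, Bool.false_eq_true, if_false]
  refine Finset.sum_congr rfl fun i _ => Finset.sum_congr rfl fun j _ => ?_
  rw [sub_neg_eq_add, neg_sub_neg, ← neg_add', norm_neg, norm_sub_rev (x j)]
  ring

end AntipodalDouble

/-- The excluded diagonal terms are `log ‖0‖ = 0` anyway. -/
theorem Elog_eq_neg_sum_log_norm (ω : Finset Esp) :
    Elog ω = -∑ x ∈ ω, ∑ y ∈ ω, Real.log ‖x - y‖ := by
  rw [Elog, ← Finset.sum_neg_distrib]
  refine Finset.sum_congr rfl fun x _ => ?_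
  rw [← Finset.sum_neg_distrib]
  refine Finset.sum_congr rfl fun y _ => ?_
  split_ifs with h
  · simp [h]
  · rw [one_div, Real.log_inv]

/-- For unit vectors the excluded diagonal terms are `log √(1 - 1) = 0` anyway. -/
theorem EPlog_eq_neg_sum_log {N : ℕ} {x : Fin N → Esp} (hx : ∀ i, ‖x i‖ = 1) :
    EPlog x = -∑ i, ∑ j, Real.log √(1 - ⟪x i, x j⟫ ^ 2) := by
  rw [EPlog]
  congr 1
  refine Finset.sum_congr rfl fun i _ => Finset.sum_congr rfl fun j _ => ?_
  split_ifs with h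
  · simp [h, hx j]
  · rfl

theorem Elog_image_antipodalDouble {N : ℕ} {x : Fin N → Esp} (hx : ∀ i, ‖x i‖ = 1)
    (hinj : (antipodalDouble x).Injective) :
    Elog (Finset.univ.image (antipodalDouble x)) =
      2 * EPlog x - 2 * (N : ℝ) ^ 2 * Real.log 2 := by
  have hinjOn : Set.InjOn (antipodalDouble x) ↑(Finset.univ : Finset (Fin N × Bool)) :=
    hinj.injOn
  rw [Elog_eq_neg_sum_log_norm]
  simp only [Finset.sum_image hinjOn]
  rw [sum_log_norm_sub_antipodalDouble, EPlog_eq_neg_sum_log hx]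
  simp only [log_sqrt_one_sub_inner_sq_eq (hx _) (hx _), Finset.sum_sub_distrib,
    Finset.sum_const, Finset.card_univ, Fintype.card_fin, nsmul_eq_mul]
  ring

theorem bddBelow_Elog_unit (n : ℕ) :
    BddBelow {e : ℝ | ∃ ω : Finset Esp, ω.card = n ∧ (∀ p ∈ ω, ‖p‖ = 1) ∧ e = Elog ω} := by
  refine ⟨-(2 * (n : ℝ) ^ 2), ?_⟩
  rintro e ⟨ω, hcard, hunit, rfl⟩
  have hlog_le : ∀ p ∈ ω, ∀ q ∈ ω, Real.log ‖p - q‖ ≤ 2 := fun p hp q hq =>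
    calc Real.log ‖p - q‖ ≤ ‖p - q‖ := Real.log_le_self (norm_nonneg _)
      _ ≤ ‖p‖ + ‖q‖ := norm_sub_le p q
      _ = 2 := by rw [hunit p hp, hunit q hq]; norm_num
  have hsum := Finset.sum_le_sum fun p hp => Finset.sum_le_sum fun q hq => hlog_le p hp q hq
  simp only [Finset.sum_const, hcard, nsmul_eq_mul] at hsum
  rw [Elog_eq_neg_sum_log_norm]
  linarith

theorem minEnergy_le_Elog {n : ℕ} {ω : Finset Esp} (hcard : ω.card = n)
    (hunit : ∀ p ∈ ω, ‖p‖ = 1) : minEnergy n ≤ Elog ω :=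
  csInf_le (bddBelow_Elog_unit n) ⟨ω, hcard, hunit, rfl⟩

theorem projective_energy_lower_bound_general
    (N : ℕ) (x : Fin N → Esp) (hx : ∀ i, ‖x i‖ = 1)
    (hdist : ∀ i j, i ≠ j → x i ≠ x j ∧ x i ≠ -x j) :
    EPlog x ≥ (1/2) * minEnergy (2*N) + (N:ℝ)^2 * Real.log 2 := by
  have hinj : (antipodalDouble x).Injective :=
    antipodalDouble_injective (fun i => norm_ne_zero_iff.mp (by simp [hx i])) hdist
  have hcard : (Finset.univ.image (antipodalDouble x)).card = 2 * N := by
    rw [Finset.card_image_of_injective _ hinj, Finset.card_univ, Fintype.card_prod,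
      Fintype.card_bool, Fintype.card_fin, mul_comm]
  have hunit : ∀ p ∈ Finset.univ.image (antipodalDouble x), ‖p‖ = 1 := by
    simp only [Finset.mem_image, Finset.mem_univ, true_and, forall_exists_index]
    rintro p q rfl
    rw [norm_antipodalDouble, hx]
  have hmin := minEnergy_le_Elog hcard hunit
  rw [Elog_image_antipodalDouble hx hinj] at hmin
  linarith

/-- For every collection `x₁,…,x_N` of unit vectors with `x_i ≠ ±x_j` for `i ≠ j`,
the projective logarithmic energy satisfies
`E^P_log(x₁,…,x_N) ≥ (1/2)·m_{2N} + N²·log 2`. -/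
theorem projective_energy_lower_bound
    (N : ℕ) (hN : 1 ≤ N) (x : Fin N → Esp) (hx : ∀ i, ‖x i‖ = 1)
    (hdist : ∀ i j, i ≠ j → x i ≠ x j ∧ x i ≠ -x j) :
    EPlog x ≥ (1/2) * minEnergy (2*N) + (N:ℝ)^2 * Real.log 2 :=
  projective_energy_lower_bound_general N x hx hdist
end
end

section
/- Let a generalized-Diamond datum with parameter M ≥ 2 be given, with constant C = C_{r(x)} and total number of points N. Then M²/(2C²) ≤ N ≤ 5·C·M². -/
/-!
The first block alone gives `N ≥ 2 β₁ (1 + ⋯ + t₁) ≥ t₁²`, and `M ≤ C t₁` turns this into the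
lower bound. For the upper bound, every value `α_ℓ + β_ℓ j` with `j ≤ M` is at most `2CM`, and the
blocks `(t_{ℓ-1}, t_ℓ]`, `ℓ ≤ n`, contain `t_n - t_0 = M - 1` integers in total, so
`N ≤ 2 + 2CM + 4CM(M - 1) ≤ 5CM²`.
-/

open Finset

theorem two_mul_sum_Icc_id (k : ℕ) : 2 * ∑ j ∈ Icc 1 k, j = k * (k + 1) := by
  induction k with
  | zero => simp
  | succ k ih => rw [sum_Icc_succ_top (by omega), mul_add, ih]; ring

theorem sq_le_two_mul_sum_Icc_affine (a : ℕ) {b : ℕ} (hb : 0 < b) (k : ℕ) :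
    k ^ 2 ≤ 2 * ∑ j ∈ Icc 1 k, (a + b * j) :=
  calc k ^ 2 ≤ k * (k + 1) := by nlinarith
    _ = 2 * ∑ j ∈ Icc 1 k, j := (two_mul_sum_Icc_id k).symm
    _ ≤ 2 * ∑ j ∈ Icc 1 k, (a + b * j) := Nat.mul_le_mul_left 2 (sum_le_sum fun j _ => by nlinarith)

theorem sum_Icc_sub_pred {G : Type*} [AddCommGroup G] (f : ℕ → G) (n : ℕ) :
    ∑ ℓ ∈ Icc 1 n, (f ℓ - f (ℓ - 1)) = f n - f 0 := by
  induction n with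
  | zero => simp
  | succ n ih => rw [sum_Icc_succ_top (by omega), ih, Nat.add_sub_cancel, sub_add_sub_cancel']

theorem sum_Icc_le_sub_mul {a b : ℕ} (hab : a ≤ b) {f : ℕ → ℝ} {c : ℝ}
    (hf : ∀ j ∈ Icc (a + 1) b, f j ≤ c) : ∑ j ∈ Icc (a + 1) b, f j ≤ ((b : ℝ) - a) * c := by
  have := sum_le_card_nsmul _ f c hf
  rwa [Nat.card_Icc, nsmul_eq_mul, Nat.add_sub_add_right, Nat.cast_sub hab] at this

theorem sum_consecutive_blocks_le {t : ℕ → ℕ} {n : ℕ} (ht : ∀ ℓ ∈ Icc 1 n, t (ℓ - 1) ≤ t ℓ)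
    {f : ℕ → ℕ → ℝ} {c : ℝ} (hf : ∀ ℓ ∈ Icc 1 n, ∀ j ∈ Icc (t (ℓ - 1) + 1) (t ℓ), f ℓ j ≤ c) :
    ∑ ℓ ∈ Icc 1 n, ∑ j ∈ Icc (t (ℓ - 1) + 1) (t ℓ), f ℓ j ≤ ((t n : ℝ) - t 0) * c :=
  calc _ ≤ ∑ ℓ ∈ Icc 1 n, ((t ℓ : ℝ) - t (ℓ - 1)) * c :=
        sum_le_sum fun ℓ hℓ => sum_Icc_le_sub_mul (ht ℓ hℓ) (hf ℓ hℓ)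
    _ = ((t n : ℝ) - t 0) * c := by rw [← sum_mul, sum_Icc_sub_pred fun ℓ => (t ℓ : ℝ)]

theorem bounds_of_eq_max_sup' {ι : Type*} {s : Finset ι} (hs : s.Nonempty) {a b : ι → ℝ}
    {M T C : ℝ} (hM : 0 < M) (hT : 0 < T)
    (hC : C = max (s.sup' hs fun ℓ => max (a ℓ / M) (b ℓ)) (M / T)) :
    (∀ ℓ ∈ s, a ℓ ≤ C * M) ∧ (∀ ℓ ∈ s, b ℓ ≤ C) ∧ M ≤ C * T := by
  have hsup : ∀ ℓ ∈ s, max (a ℓ / M) (b ℓ) ≤ C := fun ℓ hℓ =>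
    hC ▸ le_max_of_le_left (le_sup' (fun ℓ => max (a ℓ / M) (b ℓ)) hℓ)
  refine ⟨fun ℓ hℓ => ?_, fun ℓ hℓ => (le_max_right _ _).trans (hsup ℓ hℓ), ?_⟩
  · exact (div_le_iff₀ hM).1 ((le_max_left _ _).trans (hsup ℓ hℓ))
  · exact (div_le_iff₀ hT).1 (hC ▸ le_max_right _ _)

theorem sq_le_two_mul_sum_first_block {t α β : ℕ → ℕ} {n : ℕ} (hn : 1 ≤ n) (ht0 : t 0 = 0)
    (hβ : 0 < β 1) :
    t 1 ^ 2 ≤ 2 * ∑ ℓ ∈ Icc 1 n, ∑ j ∈ Icc (t (ℓ - 1) + 1) (t ℓ), (α ℓ + β ℓ * j) := by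
  have hfirst := single_le_sum (f := fun ℓ => ∑ j ∈ Icc (t (ℓ - 1) + 1) (t ℓ), (α ℓ + β ℓ * j))
    (fun _ _ => Nat.zero_le _) (mem_Icc.2 ⟨le_rfl, hn⟩)
  simp only [Nat.sub_self, ht0, zero_add] at hfirst
  have := sq_le_two_mul_sum_Icc_affine (α 1) hβ (t 1)
  omega

theorem sq_div_two_mul_sq_le {M C t N : ℝ} (hC : 0 < C) (hM : 0 ≤ M) (hMC : M ≤ C * t)
    (htN : t ^ 2 ≤ N) : M ^ 2 / (2 * C ^ 2) ≤ N := by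
  rw [div_le_iff₀ (by positivity)]
  nlinarith [mul_le_mul hMC hMC hM (hM.trans hMC), mul_le_mul_of_nonneg_left htN (sq_nonneg C)]

theorem two_add_le_five_mul_sq {M C a b S : ℝ} (hM : 2 ≤ M) (hC : 1 ≤ C) (ha : a ≤ C * M)
    (hb : b ≤ C) (hS : S ≤ (M - 1) * (2 * C * M)) : 2 + (a + b * M) + 2 * S ≤ 5 * C * M ^ 2 := by
  nlinarith [mul_le_mul_of_nonneg_right hb (by linarith : (0 : ℝ) ≤ M),
    mul_le_mul hC hM zero_le_two (by linarith)]

/-- **Size of the generalized Diamond ensemble.** For a generalized-Diamond datum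
(integers `M ≥ 2`, `n ≥ 1`, breakpoints `0 = t 0 < t 1 < ⋯ < t n = M-1 < t (n+1) = M`,
nonnegative integers `α ℓ, β ℓ` with `β 1 > 0`, so that `r(x) = α ℓ + β ℓ x` on
`(t (ℓ-1), t ℓ]`, with `r(j) ≥ 1` for all integers `1 ≤ j ≤ M`), with its constant
`C = max_ℓ (α ℓ / M, β ℓ, M / t 1)` and total number of points
`N = 2 + (α (n+1) + β (n+1) M) + 2 ∑_{ℓ=1}^n ∑_{j=t (ℓ-1)+1}^{t ℓ} (α ℓ + β ℓ j)`,
one has `M²/(2C²) ≤ N ≤ 5 C M²`. -/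
theorem diamond_size_bounds
    (M n : ℕ) (hM : 2 ≤ M) (hn : 1 ≤ n)
    (t α β : ℕ → ℕ)
    (ht0 : t 0 = 0) (htn : t n = M - 1)
    (htmono : ∀ ℓ, ℓ ≤ n → t ℓ < t (ℓ+1))
    (hβ : 0 < β 1)
    (C : ℝ)
    (hC : C = max ((Finset.Icc 1 (n+1)).sup' (Finset.nonempty_Icc.mpr (by omega))
        (fun ℓ => max ((α ℓ : ℝ) / M) (β ℓ))) ((M:ℝ) / (t 1)))
    (N : ℕ)
    (hN : N = 2 + (α (n+1) + β (n+1) * M)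
        + 2 * ∑ ℓ ∈ Finset.Icc 1 n, ∑ j ∈ Finset.Icc (t (ℓ-1) + 1) (t ℓ), (α ℓ + β ℓ * j)) :
    (M:ℝ)^2 / (2 * C^2) ≤ (N:ℝ) ∧ (N:ℝ) ≤ 5 * C * (M:ℝ)^2 := by
  have ht_le : ∀ {i j}, i ≤ j → j ≤ n + 1 → t i ≤ t j := fun hij hj =>
    (strictMonoOn_Iic_of_lt_succ fun m hm => htmono m (by omega)).monotoneOn
      (Set.mem_Iic.2 (by omega)) (Set.mem_Iic.2 hj) hij
  have ht_le_M : ∀ ℓ ≤ n, (t ℓ : ℝ) ≤ M := fun ℓ hℓ => by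
    exact_mod_cast (htn ▸ ht_le hℓ (by omega) : t ℓ ≤ M - 1).trans (Nat.sub_le M 1)
  have ht1 : (0 : ℝ) < t 1 := by exact_mod_cast ht0 ▸ htmono 0 (by omega)
  have hM0 : (0 : ℝ) < M := by positivity
  obtain ⟨hαC, hβC, hMC⟩ := bounds_of_eq_max_sup' _ hM0 ht1 hC
  have hC1 : 1 ≤ C := by nlinarith [ht_le_M 1 hn]
  have hNt : (t 1 : ℝ) ^ 2 ≤ N := by
    have := sq_le_two_mul_sum_first_block (α := α) hn ht0 hβ
    exact_mod_cast (by omega : t 1 ^ 2 ≤ N)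
  refine ⟨sq_div_two_mul_sq_le (by linarith) hM0.le hMC hNt, ?_⟩
  have hr : ∀ ℓ ∈ Icc 1 n, ∀ j ∈ Icc (t (ℓ - 1) + 1) (t ℓ), (α ℓ : ℝ) + β ℓ * j ≤ 2 * C * M := by
    intro ℓ hℓ j hj
    rw [mem_Icc] at hℓ hj
    have hℓ' : ℓ ∈ Icc 1 (n + 1) := mem_Icc.2 ⟨hℓ.1, by omega⟩
    have hjM : (j : ℝ) ≤ M := (Nat.cast_le.2 hj.2).trans (ht_le_M ℓ hℓ.2)
    nlinarith [hαC ℓ hℓ', mul_le_mul (hβC ℓ hℓ') hjM (Nat.cast_nonneg j) (by linarith)]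
  have hblocks := sum_consecutive_blocks_le
    (fun ℓ hℓ => ht_le (Nat.sub_le ℓ 1) ((mem_Icc.1 hℓ).2.trans n.le_succ)) hr
  rw [ht0, htn, Nat.cast_sub (by omega), Nat.cast_one, Nat.cast_zero, sub_zero] at hblocks
  rw [hN]; push_cast
  exact two_add_le_five_mul_sq (by exact_mod_cast hM) hC1 (hαC _ (by simp)) (hβC _ (by simp))
    hblocks
end

section
/- Let a generalized-Diamond datum with parameter M ≥ 2 and constant C = C_{r(x)} be given. For each 1 ≤ ℓ ≤ n, let f_ℓ(x) = (α_ℓ + β_ℓ·x)·log(α_ℓ + β_ℓ·x). Then |T_{[t_{ℓ−1}+1, t_ℓ]}(f_ℓ) − ∫_{t_{ℓ−1}+1}^{t_ℓ} f_ℓ(x) dx| ≤ 3·C·M·log(2·C·M). -/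
/-!
On a unit interval `[a, a + 1]` with midpoint `m`, integrating by parts against `x - m` shows that
the trapezoid error of `f` is `∫ (f' x - f' m) (x - m)`. When `f'` is monotone the integrand lies
between `0` and `(f' (a + 1) - f' a) / 2`, so over `[a, b]` the errors telescope to at most
`(f' b - f' a) / 2`. For `f = r log r` with `r = α + β x` we have `f' = β (log r + 1)`, and
`1 ≤ r ≤ 2 C M` on the piece, so the error is at most `C log (2 C M) / 2`. On a piece with a single
node the rule returns `f` at that node, which is at most `2 C M log (2 C M)`.
-/

open scoped Real Classical

open Real Set MeasureTheory intervalIntegral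

noncomputable def trapezoidSum (f : ℝ → ℝ) (a b : ℕ) : ℝ :=
  (f a + f b) / 2 + ∑ j ∈ Finset.Ico (a + 1) b, f j

lemma trapezoidSum_self (f : ℝ → ℝ) (a : ℕ) : trapezoidSum f a a = f a := by
  simp [trapezoidSum]

lemma trapezoidSum_add_one (f : ℝ → ℝ) {a b : ℕ} (hab : a < b) :
    trapezoidSum f a (b + 1) = trapezoidSum f a b + (f b + f (b + 1)) / 2 := by
  simp only [trapezoidSum, Finset.sum_Ico_succ_top hab, Nat.cast_add_one]
  ring

section UnitStep

variable {f g : ℝ → ℝ} {a : ℝ}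

lemma trapezoid_unit_error_eq (hf : ∀ x ∈ Icc a (a + 1), HasDerivAt f (g x) x)
    (hg : IntervalIntegrable g volume a (a + 1)) :
    (f a + f (a + 1)) / 2 - ∫ x in a..a + 1, f x
      = ∫ x in a..a + 1, (g x - g (a + 1 / 2)) * (x - (a + 1 / 2)) := by
  have huIcc : uIcc a (a + 1) = Icc a (a + 1) := uIcc_of_le (by linarith)
  have hparts := integral_mul_deriv_eq_deriv_mul (v := fun x => x - (a + 1 / 2))
    (v' := fun _ => 1) (fun x hx => hf x (huIcc ▸ hx))
    (fun x _ => (hasDerivAt_id x).sub_const _) hg intervalIntegrable_const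
  have hmean : ∫ x in a..a + 1, (x - (a + 1 / 2)) = 0 := by
    rw [integral_comp_sub_right (fun x => x), integral_id]; ring
  simp only [mul_one] at hparts
  simp_rw [sub_mul]
  rw [integral_sub (hg.mul_continuousOn (by fun_prop))
    (Continuous.intervalIntegrable (by fun_prop) _ _), intervalIntegral.integral_const_mul,
    hmean, hparts]
  ring

lemma trapezoid_unit_error_mem (hf : ∀ x ∈ Icc a (a + 1), HasDerivAt f (g x) x)
    (hg : MonotoneOn g (Icc a (a + 1))) :
    (f a + f (a + 1)) / 2 - ∫ x in a..a + 1, f x ∈ Icc 0 ((g (a + 1) - g a) / 2) := by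
  have hle : a ≤ a + 1 := by linarith
  have hgi : IntervalIntegrable g volume a (a + 1) :=
    (uIcc_of_le hle ▸ hg).intervalIntegrable
  set m := a + 1 / 2 with hm_def
  have hm : m ∈ Icc a (a + 1) := ⟨by linarith, by linarith⟩
  have hpt : ∀ x ∈ Icc a (a + 1),
      0 ≤ (g x - g m) * (x - m) ∧ (g x - g m) * (x - m) ≤ (g (a + 1) - g a) / 2 := by
    intro x hx
    rcases le_total x m with hxm | hmx
    · have hgm := hg hx hm hxm
      have hga := hg (left_mem_Icc.2 hle) hx hx.1
      have hgb := hg hm (right_mem_Icc.2 hle) hm.2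
      constructor
      · nlinarith
      · nlinarith [mul_le_mul (show g m - g x ≤ g (a + 1) - g a by linarith)
          (show m - x ≤ 1 / 2 by linarith [hx.1]) (by linarith) (by linarith)]
    · have hgm := hg hm hx hmx
      have hga := hg (left_mem_Icc.2 hle) hm hm.1
      have hgb := hg hx (right_mem_Icc.2 hle) hx.2
      constructor
      · nlinarith
      · nlinarith [mul_le_mul (show g x - g m ≤ g (a + 1) - g a by linarith)
          (show x - m ≤ 1 / 2 by linarith [hx.2]) (by linarith) (by linarith)]
  rw [trapezoid_unit_error_eq hf hgi]
  refine ⟨integral_nonneg hle fun x hx => (hpt x hx).1, ?_⟩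
  calc ∫ x in a..a + 1, (g x - g m) * (x - m)
      ≤ ∫ _ in a..a + 1, (g (a + 1) - g a) / 2 :=
        integral_mono_on hle (hgi.sub intervalIntegrable_const |>.mul_continuousOn
          (by fun_prop)) intervalIntegrable_const fun x hx => (hpt x hx).2
    _ = (g (a + 1) - g a) / 2 := by simp

end UnitStep

lemma trapezoidSum_sub_integral_mem {f g : ℝ → ℝ} {a b : ℕ} (hab : a < b)
    (hf : ∀ x ∈ Icc (a : ℝ) b, HasDerivAt f (g x) x) (hg : MonotoneOn g (Icc (a : ℝ) b)) :
    trapezoidSum f a b - ∫ x in (a : ℝ)..b, f x ∈ Icc 0 ((g b - g a) / 2) := by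
  induction b, hab using Nat.le_induction with
  | base =>
    simpa [trapezoidSum] using trapezoid_unit_error_mem (f := f) (a := a) (by simpa using hf)
      (by simpa using hg)
  | succ b hab ih =>
    push_cast at hf hg ⊢
    have hab' : (a : ℝ) ≤ b := by exact_mod_cast (show a ≤ b by omega)
    have hleft : Icc (a : ℝ) b ⊆ Icc (a : ℝ) (b + 1) := Icc_subset_Icc_right (by linarith)
    have hright : Icc (b : ℝ) (b + 1) ⊆ Icc (a : ℝ) (b + 1) := Icc_subset_Icc_left hab'
    have hfc : ContinuousOn f (Icc (a : ℝ) (b + 1)) :=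
      fun x hx => (hf x hx).continuousAt.continuousWithinAt
    have hint : ∀ {c d : ℝ}, Icc c d ⊆ Icc (a : ℝ) (b + 1) → c ≤ d →
        IntervalIntegrable f volume c d := fun hcd hle =>
      ((hfc.mono hcd).mono (uIcc_of_le hle).subset).intervalIntegrable
    obtain ⟨h₁, h₂⟩ := ih (fun x hx => hf x (hleft hx)) (hg.mono hleft)
    obtain ⟨h₃, h₄⟩ := trapezoid_unit_error_mem (fun x hx => hf x (hright hx)) (hg.mono hright)
    rw [trapezoidSum_add_one f (show a < b by omega), ← integral_add_adjacent_intervals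
      (hint hleft hab') (hint hright (by linarith))]
    constructor <;> linarith

lemma hasDerivAt_affine_mul_log {α β x : ℝ} (hx : α + β * x ≠ 0) :
    HasDerivAt (fun x => (α + β * x) * log (α + β * x))
      (β * (log (α + β * x) + 1)) x := by
  have := (hasDerivAt_mul_log hx).comp x (((hasDerivAt_id x).const_mul β).const_add α)
  simpa [Function.comp_def, mul_comm] using this

lemma abs_trapezoidSum_sub_integral_affine_mul_log_le {α β K M : ℝ} {a b : ℕ} (hβ : 0 ≤ β)
    (hab : a ≤ b) (hbM : (b : ℝ) ≤ M) (hM : 1 ≤ M) (ha : 1 ≤ α + β * a) (hαK : α ≤ K * M)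
    (hβK : β ≤ K) :
    |trapezoidSum (fun x => (α + β * x) * log (α + β * x)) a b
      - ∫ x in (a : ℝ)..b, (α + β * x) * log (α + β * x)|
      ≤ 3 * K * M * log (2 * K * M) := by
  have hK : 0 ≤ K := hβ.trans hβK
  have hr : ∀ x ∈ Icc (a : ℝ) b, 1 ≤ α + β * x ∧ α + β * x ≤ 2 * K * M := by
    intro x hx
    have hx0 : (0 : ℝ) ≤ x := (Nat.cast_nonneg a).trans hx.1
    constructor
    · nlinarith [mul_le_mul_of_nonneg_left hx.1 hβ]
    · nlinarith [mul_le_mul hβK (hx.2.trans hbM) hx0 hK]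
  have hab' : (a : ℝ) ≤ b := by exact_mod_cast hab
  have hra := hr a (left_mem_Icc.2 hab')
  have hrb := hr b (right_mem_Icc.2 hab')
  have hL : 0 ≤ log (2 * K * M) := log_nonneg (hra.1.trans hra.2)
  have hKML : 0 ≤ K * M * log (2 * K * M) := by positivity
  rcases hab.eq_or_lt with rfl | hlt
  · have hfa : (α + β * a) * log (α + β * a) ≤ 2 * K * M * log (2 * K * M) :=
      mul_le_mul hra.2 (log_le_log (by linarith) hra.2)
        (log_nonneg hra.1) (by linarith)
    have hfa0 : 0 ≤ (α + β * a) * log (α + β * a) :=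
      mul_nonneg (by linarith) (log_nonneg hra.1)
    rw [trapezoidSum_self, integral_same, sub_zero, abs_of_nonneg hfa0]
    linarith
  · have hderiv : ∀ x ∈ Icc (a : ℝ) b, HasDerivAt _ _ x := fun x hx =>
      hasDerivAt_affine_mul_log (α := α) (β := β) (by linarith [(hr x hx).1])
    have hmono : MonotoneOn (fun x => β * (log (α + β * x) + 1)) (Icc (a : ℝ) b) := by
      intro x hx y _ hxy
      have := (hr x hx).1
      dsimp only
      gcongr
    obtain ⟨hlow, hup⟩ := trapezoidSum_sub_integral_mem hlt hderiv hmono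
    have hgap : β * (log (α + β * b) + 1) - β * (log (α + β * a) + 1)
        ≤ K * log (2 * K * M) := by
      have hlogb := log_le_log (by linarith) hrb.2
      have hloga := log_nonneg hra.1
      nlinarith [mul_le_mul hβK hlogb (log_nonneg hrb.1) hK]
    rw [abs_le]
    constructor <;> nlinarith [mul_le_mul_of_nonneg_left hM (mul_nonneg hK hL)]

/-- **Trapezoidal-rule error for `f_ℓ`** (Lemma 3.3 of Beltrán–Etayo, adapted).
For a generalized-Diamond datum with constant `C = C_{r(x)}` and
`f_ℓ(x) = (α ℓ + β ℓ x) log (α ℓ + β ℓ x)`, the composite trapezoidal rule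
`T_{[t (ℓ-1)+1, t ℓ]}(f_ℓ)` differs from `∫_{t (ℓ-1)+1}^{t ℓ} f_ℓ` by at most
`3 C M log (2 C M)`. -/
theorem trapezoid_error_f
    (M n : ℕ) (hM : 2 ≤ M)
    (t α β : ℕ → ℕ)
    (htn : t n = M - 1)
    (htmono : ∀ ℓ, ℓ ≤ n → t ℓ < t (ℓ+1))
    (hrpos : ∀ ℓ, 1 ≤ ℓ → ℓ ≤ n+1 → ∀ j, t (ℓ-1) < j → j ≤ t ℓ → 1 ≤ α ℓ + β ℓ * j)
    (C : ℝ)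
    (hC : C = max ((Finset.Icc 1 (n+1)).sup' (Finset.nonempty_Icc.mpr (by omega))
        (fun ℓ => max ((α ℓ : ℝ) / M) (β ℓ))) ((M:ℝ) / (t 1)))
    (ℓ : ℕ) (hℓ1 : 1 ≤ ℓ) (hℓn : ℓ ≤ n)
    (f : ℝ → ℝ)
    (hf : ∀ x : ℝ, f x = ((α ℓ : ℝ) + (β ℓ : ℝ) * x) * Real.log ((α ℓ : ℝ) + (β ℓ : ℝ) * x)) :
    |((f (t (ℓ-1) + 1) + f (t ℓ)) / 2 + ∑ j ∈ Finset.Ico (t (ℓ-1) + 1 + 1) (t ℓ), f j)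
      - ∫ x in ((t (ℓ-1) : ℝ) + 1)..((t ℓ : ℝ)), f x|
    ≤ 3 * C * M * Real.log (2 * C * M) := by
  obtain rfl : f = _ := funext hf
  have hMpos : (0 : ℝ) < M := by positivity
  have hcoef : max ((α ℓ : ℝ) / M) (β ℓ) ≤ C := hC ▸ le_max_of_le_left
    (Finset.le_sup' (fun k => max ((α k : ℝ) / M) (β k)) (Finset.mem_Icc.2 ⟨hℓ1, by omega⟩))
  have hpiece : t (ℓ - 1) < t ℓ := by simpa [Nat.sub_add_cancel hℓ1] using htmono (ℓ - 1) (by omega)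
  have htℓ : t ℓ ≤ t n := monotoneOn_of_le_add_one ordConnected_Iic
    (fun i _ hi _ => (htmono i hi).le) hℓn (mem_Iic.2 le_rfl) hℓn
  have key := abs_trapezoidSum_sub_integral_affine_mul_log_le (K := C) (M := M)
    (a := t (ℓ - 1) + 1) (b := t ℓ) (Nat.cast_nonneg _) hpiece
    (by exact_mod_cast (show t ℓ ≤ M by omega)) (by exact_mod_cast (show 1 ≤ M by omega))
    (by exact_mod_cast hrpos ℓ hℓ1 (by omega) _ (by omega) hpiece)
    ((div_le_iff₀ hMpos).1 (le_of_max_le_left hcoef)) (le_of_max_le_right hcoef)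
  simpa [trapezoidSum] using key
end

section
/- For every integer N ≥ 241 there exist integers m ≥ 1, γ with 0 ≤ γ ≤ 800, ε ∈ {−1, 0, 1}, and d with 6m ≤ d ≤ 7m−1, such that N = 239·m² + 2 + (2m−1)·γ + 2·(7m−1−d) + 1 + ε. -/
/-!
Take `m` maximal with `239 m² + 2 ≤ N`, so the remainder `R = N - 239 m² - 2` satisfies
`0 ≤ R ≤ 478 m + 238`. Writing `j = 7m - 1 - d ∈ [0, m - 1]`, the terms `2 j + 1 + ε` sweep out
every integer in `[0, 2m]`, a window at least as long as the step `2m - 1` of the multiples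
`(2m - 1) γ`; hence every `R ∈ [0, 800 (2m - 1) + 2m]` is reached, and this bound exceeds
`478 m + 238` as soon as `m ≥ 1`.
-/

theorem Nat.exists_mul_sq_le_lt_mul_succ_sq {a n : ℕ} (ha : 0 < a) (hn : a ≤ n) :
    ∃ m, 1 ≤ m ∧ a * m ^ 2 ≤ n ∧ n < a * (m + 1) ^ 2 := by
  refine ⟨Nat.sqrt (n / a), Nat.le_sqrt'.2 ?_, ?_, ?_⟩
  · rwa [one_pow, Nat.le_div_iff_mul_le ha, one_mul]
  · calc a * Nat.sqrt (n / a) ^ 2 ≤ a * (n / a) := Nat.mul_le_mul_left a (Nat.sqrt_le' _)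
      _ ≤ n := Nat.mul_div_le n a
  · rw [mul_comm, ← Nat.div_lt_iff_lt_mul ha]
    exact Nat.lt_succ_sqrt' _

theorem Int.exists_eq_mul_add_of_le {b K s R : ℤ} (hb : 0 < b) (hK : 0 ≤ K) (hs : b - 1 ≤ s)
    (hR : 0 ≤ R) (hRle : R ≤ b * K + s) :
    ∃ γ t, 0 ≤ γ ∧ γ ≤ K ∧ 0 ≤ t ∧ t ≤ s ∧ R = b * γ + t := by
  rcases le_or_gt (R / b) K with hq | hq
  · refine ⟨R / b, R % b, Int.ediv_nonneg hR hb.le, hq, Int.emod_nonneg R hb.ne',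
      by linarith [Int.emod_lt_of_pos R hb], (Int.mul_ediv_add_emod R b).symm⟩
  · have hbK : b * K ≤ R :=
      calc b * K ≤ b * (R / b) := mul_le_mul_of_nonneg_left hq.le hb.le
        _ ≤ R := Int.mul_ediv_self_le hb.ne'
    exact ⟨K, R - b * K, hK, le_rfl, by linarith, by linarith, by ring⟩

theorem Int.exists_eq_two_mul_add_one_add {m t : ℤ} (hm : 1 ≤ m) (ht : 0 ≤ t) (htm : t ≤ 2 * m) :
    ∃ j ε, 0 ≤ j ∧ j ≤ m - 1 ∧ (ε = -1 ∨ ε = 0 ∨ ε = 1) ∧ t = 2 * j + 1 + ε :=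
  ⟨min (t / 2) (m - 1), t - 1 - 2 * min (t / 2) (m - 1), by omega, by omega, by omega, by ring⟩

/-- **Counting identity for the quasioptimal generalized Diamond ensemble.**
Every integer `N ≥ 241` can be written as
`N = 239 m² + 2 + (2m-1) γ + 2 (7m-1-d) + 1 + ε`
with integers `m ≥ 1`, `0 ≤ γ ≤ 800`, `ε ∈ {-1,0,1}` and `6m ≤ d ≤ 7m-1`. -/
theorem quasioptimal_diamond_counting (N : ℕ) (hN : 241 ≤ N) :
    ∃ m γ d ε : ℤ, 1 ≤ m ∧ 0 ≤ γ ∧ γ ≤ 800 ∧ (ε = -1 ∨ ε = 0 ∨ ε = 1) ∧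
      6*m ≤ d ∧ d ≤ 7*m - 1 ∧
      (N : ℤ) = 239*m^2 + 2 + (2*m - 1)*γ + 2*(7*m - 1 - d) + 1 + ε := by
  obtain ⟨m, hm, hlow, hup⟩ :=
    Nat.exists_mul_sq_le_lt_mul_succ_sq (a := 239) (n := N - 2) (by norm_num) (by omega)
  zify [show 2 ≤ N by omega] at hm hlow hup
  obtain ⟨γ, t, hγ0, hγ800, ht0, ht, hR⟩ :=
    Int.exists_eq_mul_add_of_le (b := 2 * m - 1) (K := 800) (s := 2 * m)
      (R := N - 2 - 239 * m ^ 2) (by omega) (by norm_num) (by omega) (by linarith) (by nlinarith)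
  obtain ⟨j, ε, hj0, hjm, hε, rfl⟩ := Int.exists_eq_two_mul_add_one_add hm ht0 ht
  exact ⟨m, γ, 7 * m - 1 - j, ε, hm, hγ0, hγ800, hε, by omega, by omega, by linarith⟩
end

section
/- For every A ≥ 1 there exists a constant Υ > 0 with the following property. Let M ≥ 2 and let r_1,…,r_M be positive integers with j/A ≤ r_j ≤ A·j for all 1 ≤ j ≤ M. Set D = 1 + 2·Σ_{k=1}^{M−1} r_k + r_M and z_j = 1 − (1 + r_j + 2·Σ_{k=1}^{j−1} r_k)/D for 1 ≤ j ≤ M. Then |Σ_{j=1}^{M−1} r_j·log(1 − ((z_j−1)/(z_j+1))^{r_j})| ≤ Υ·M. -/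
/-!
Write `C j = cumulativeWeight r j = 1 + r j + 2 ∑_{k<j} r k`, so that `D = C M` and `z j = 1 - C j / D`. Then
`(z j - 1)/(z j + 1) = -t` with `t = antipodalRatio r M j = C j / (2D - C j) ∈ [0, 1)`, and
`t ^ n ≤ exp (-n (1 - t))`.
The growth condition `j/A ≤ r j ≤ A j` makes `D ≍ M²` and `D - C j ≳ (M - j) M`, whence
`r j (1 - t) ≳ min j (M - j) / A³`. So the `j`-th logarithm is geometrically small away from
both ends, the logarithms sum to `O(1)`, and the weights `r j ≤ A M` give the bound `O(M)`.
-/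

open Finset Real

theorem Real.abs_log_one_sub_le {x a b : ℝ} (hxa : |x| ≤ a) (hab : a ≤ b) (hb : b < 1) :
    |log (1 - x)| ≤ a / (1 - b) := by
  have hx : |x| < 1 := hxa.trans_lt (hab.trans_lt hb)
  have h := abs_log_sub_add_sum_range_le hx 0
  simp only [range_zero, sum_empty, zero_add, pow_one] at h
  exact h.trans (div_le_div₀ ((abs_nonneg x).trans hxa) hxa (by linarith) (by linarith))

theorem pow_le_exp_neg_mul_one_sub {t : ℝ} (ht : 0 ≤ t) (n : ℕ) :
    t ^ n ≤ exp (-(n * (1 - t))) :=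
  calc t ^ n ≤ exp (t - 1) ^ n := pow_le_pow_left₀ ht (by linarith [add_one_le_exp (t - 1)]) n
    _ = exp (-(n * (1 - t))) := by rw [← exp_nat_mul]; ring_nf

theorem sum_Icc_pow_min_sub_le {q : ℝ} (hq₀ : 0 < q) (hq₁ : q < 1) (M : ℕ) :
    ∑ j ∈ Icc 1 (M - 1), q ^ min j (M - j) ≤ 2 * (1 - q)⁻¹ := by
  have hsub : Icc 1 (M - 1) ⊆ range (M + 1) := fun j hj => by
    simp only [mem_Icc, mem_range] at hj ⊢; omega
  calc ∑ j ∈ Icc 1 (M - 1), q ^ min j (M - j)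
      ≤ ∑ j ∈ range (M + 1), (q ^ j + q ^ (M - j)) := by
        refine (sum_le_sum fun j _ => ?_).trans
          (sum_le_sum_of_subset_of_nonneg hsub fun j _ _ => by positivity)
        rcases min_choice j (M - j) with h | h <;> rw [h] <;>
          linarith [pow_pos hq₀ j, pow_pos hq₀ (M - j)]
    _ = 2 * ∑ j ∈ range (M + 1), q ^ j := by
        have reflect := sum_range_reflect (fun j => q ^ j) (M + 1)
        simp only [add_tsub_cancel_right] at reflect
        rw [sum_add_distrib, reflect, two_mul]
    _ ≤ 2 * (1 - q)⁻¹ := by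
        have h := geom_sum_Ico_le_of_lt_one (m := 0) (n := M + 1) hq₀.le hq₁
        rw [← range_eq_Ico, pow_zero, one_div] at h
        linarith

theorem min_sub_mul_le {x m : ℝ} (hx : 0 ≤ x) (hxm : x ≤ m) :
    min x (m - x) * m ≤ 2 * x * (m - x) := by
  rcases le_total x (m - x) with h | h
  · rw [min_eq_left h]; nlinarith
  · rw [min_eq_right h]; nlinarith

theorem antipodal_ratio_eq {c d : ℝ} (hd : d ≠ 0) :
    (1 - c / d - 1) / (1 - c / d + 1) = -(c / (2 * d - c)) := by
  rw [show 1 - c / d + 1 = (2 * d - c) / d by field_simp; ring]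
  field_simp
  ring

theorem sub_div_le_one_sub_div_two_mul_sub {c d : ℝ} (hc : 0 ≤ c) (hcd : c ≤ d) (hd : 0 < d) :
    (d - c) / d ≤ 1 - c / (2 * d - c) := by
  have : 2 * d - c ≠ 0 := by linarith
  rw [show 1 - c / (2 * d - c) = 2 * (d - c) / (2 * d - c) by field_simp; ring]
  rw [div_le_div_iff₀ hd (by linarith)]
  nlinarith

noncomputable def cumulativeWeight (r : ℕ → ℕ) (j : ℕ) : ℝ :=
  1 + r j + 2 * ∑ k ∈ Ico 1 j, (r k : ℝ)

noncomputable def antipodalRatio (r : ℕ → ℕ) (M j : ℕ) : ℝ :=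
  cumulativeWeight r j / (2 * cumulativeWeight r M - cumulativeWeight r j)

namespace cumulativeWeight

variable {r : ℕ → ℕ} {A : ℝ} {M : ℕ}

theorem one_le (r : ℕ → ℕ) (j : ℕ) : 1 ≤ cumulativeWeight r j := by
  have := sum_nonneg fun k (_ : k ∈ Ico 1 j) => (r k).cast_nonneg (α := ℝ)
  unfold cumulativeWeight
  linarith [(r j).cast_nonneg (α := ℝ)]

theorem succ {k : ℕ} (hk : 1 ≤ k) :
    cumulativeWeight r (k + 1) = cumulativeWeight r k + r k + r (k + 1) := by
  simp only [cumulativeWeight, sum_Ico_succ_top hk]; ring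

theorem le_of_le {j : ℕ} (hj : 1 ≤ j) (hjM : j ≤ M) :
    cumulativeWeight r j ≤ cumulativeWeight r M := by
  induction M, hjM using Nat.le_induction with
  | base => rfl
  | succ n hn ih =>
    rw [succ (hj.trans hn)]
    linarith [(r n).cast_nonneg (α := ℝ), (r (n + 1)).cast_nonneg (α := ℝ)]

theorem le_two_mul_sq (hA : 1 ≤ A) (hr : ∀ k, 1 ≤ k → k ≤ M → (r k : ℝ) ≤ A * k) (hM : 1 ≤ M) :
    cumulativeWeight r M ≤ 2 * A * M ^ 2 := by
  induction M, hM using Nat.le_induction with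
  | base =>
    have := hr 1 le_rfl le_rfl
    simp only [cumulativeWeight, Ico_self, sum_empty, Nat.cast_one] at *
    linarith
  | succ n hn ih =>
    rw [succ hn]
    have := ih fun k hk hkn => hr k hk (hkn.trans n.le_succ)
    have := hr n hn n.le_succ
    have := hr (n + 1) (by omega) le_rfl
    push_cast at *
    nlinarith

theorem sub_mul_div_le_sub (hA : 0 < A) {j : ℕ} (hr : ∀ k, j < k → k ≤ M → (k : ℝ) / A ≤ r k)
    (hj : 1 ≤ j) (hjM : j ≤ M) :
    ((M : ℝ) - j) * M / (2 * A) ≤ cumulativeWeight r M - cumulativeWeight r j := by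
  induction M, hjM using Nat.le_induction with
  | base => simp
  | succ n hn ih =>
    rw [succ (hj.trans hn)]
    have := ih fun k hk hkn => hr k hk (hkn.trans n.le_succ)
    have := hr (n + 1) (by omega) le_rfl
    have : (0 : ℝ) ≤ r n := by positivity
    have : (j : ℝ) ≤ n := by exact_mod_cast hn
    rw [div_le_iff₀ (by positivity)] at *
    push_cast at *
    nlinarith

theorem sub_div_le_one_sub_antipodalRatio (hA : 1 ≤ A)
    (hr : ∀ k, 1 ≤ k → k ≤ M → (k : ℝ) / A ≤ r k ∧ (r k : ℝ) ≤ A * k) {j : ℕ} (hj : 1 ≤ j)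
    (hjM : j ≤ M) :
    ((M : ℝ) - j) / (4 * A ^ 2 * M) ≤ 1 - antipodalRatio r M j := by
  have hA₀ : 0 < A := by linarith
  have hM : (0 : ℝ) < M := by exact_mod_cast hj.trans hjM
  have hsub := sub_mul_div_le_sub hA₀ (fun k hk hkM => (hr k (by omega) hkM).1) hj hjM
  have hle := le_two_mul_sq hA (fun k hk hkM => (hr k hk hkM).2) (hj.trans hjM)
  have hgap : 0 ≤ ((M : ℝ) - j) * M / (2 * A) :=
    div_nonneg (mul_nonneg (sub_nonneg.2 (by exact_mod_cast hjM)) hM.le) (by positivity)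
  calc ((M : ℝ) - j) / (4 * A ^ 2 * M) = ((M - j) * M / (2 * A)) / (2 * A * M ^ 2) := by
        field_simp; ring
    _ ≤ (cumulativeWeight r M - cumulativeWeight r j) / cumulativeWeight r M :=
        div_le_div₀ (hgap.trans hsub) hsub (by linarith [one_le r M]) hle
    _ ≤ _ := sub_div_le_one_sub_div_two_mul_sub (by linarith [one_le r j]) (le_of_le hj hjM)
        (by linarith [one_le r M])

theorem inv_mul_min_le_mul_one_sub_antipodalRatio (hA : 1 ≤ A)
    (hr : ∀ k, 1 ≤ k → k ≤ M → (k : ℝ) / A ≤ r k ∧ (r k : ℝ) ≤ A * k) {j : ℕ} (hj : 1 ≤ j)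
    (hjM : j ≤ M) :
    (8 * A ^ 3)⁻¹ * (min j (M - j) : ℕ) ≤ r j * (1 - antipodalRatio r M j) := by
  have hA₀ : 0 < A := by linarith
  have hM : (0 : ℝ) < M := by exact_mod_cast hj.trans hjM
  have hjM' : (j : ℝ) ≤ M := by exact_mod_cast hjM
  have hmin := min_sub_mul_le (Nat.cast_nonneg j) hjM'
  calc (8 * A ^ 3)⁻¹ * (min j (M - j) : ℕ) = min (j : ℝ) (M - j) * M / (8 * A ^ 3 * M) := by
        push_cast [Nat.cast_sub hjM]; field_simp
    _ ≤ 2 * j * (M - j) / (8 * A ^ 3 * M) := by gcongr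
    _ = j / A * ((M - j) / (4 * A ^ 2 * M)) := by field_simp; ring
    _ ≤ _ := mul_le_mul (hr j hj hjM).1 (sub_div_le_one_sub_antipodalRatio hA hr hj hjM)
        (div_nonneg (sub_nonneg.2 hjM') (by positivity)) (Nat.cast_nonneg _)

theorem abs_log_one_sub_antipodal_pow_le (hA : 1 ≤ A)
    (hr : ∀ k, 1 ≤ k → k ≤ M → (k : ℝ) / A ≤ r k ∧ (r k : ℝ) ≤ A * k) {j : ℕ} (hj : 1 ≤ j)
    (hjM : j < M) :
    |log (1 - ((1 - cumulativeWeight r j / cumulativeWeight r M - 1) /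
        (1 - cumulativeWeight r j / cumulativeWeight r M + 1)) ^ r j)| ≤
      exp (-(8 * A ^ 3)⁻¹) ^ min j (M - j) / (1 - exp (-(8 * A ^ 3)⁻¹)) := by
  set c := (8 * A ^ 3)⁻¹
  set t := antipodalRatio r M j
  have hc : 0 < c := by positivity
  have ht : 0 ≤ t :=
    div_nonneg (by linarith [one_le r j]) (by linarith [one_le r j, le_of_le (r := r) hj hjM.le])
  rw [antipodal_ratio_eq (by linarith [one_le r M])]
  change |log (1 - (-t) ^ r j)| ≤ _
  refine Real.abs_log_one_sub_le ?_ (pow_le_of_le_one (exp_pos _).le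
    (exp_le_one_iff.2 (by linarith)) (by omega)) (exp_lt_one_iff.2 (by linarith))
  calc |(-t) ^ r j| = t ^ r j := by rw [abs_pow, abs_neg, abs_of_nonneg ht]
    _ ≤ exp (-(r j * (1 - t))) := pow_le_exp_neg_mul_one_sub ht _
    _ ≤ exp (-(c * (min j (M - j) : ℕ))) :=
        exp_le_exp.2 (neg_le_neg (inv_mul_min_le_mul_one_sub_antipodalRatio hA hr hj hjM.le))
    _ = exp (-c) ^ min j (M - j) := by rw [← exp_nat_mul]; ring_nf

end cumulativeWeight

/-- **Bound on the antipodal correction term** (Lemma 4.3 of the paper). For every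
`A ≥ 1` there is `Υ > 0` such that, whenever `M ≥ 2`, `r_1,…,r_M` are positive
integers with `j/A ≤ r_j ≤ A j`, `D = 1 + 2 ∑_{k=1}^{M-1} r_k + r_M` and
`z_j = 1 - (1 + r_j + 2 ∑_{k<j} r_k)/D`, we have
`|∑_{j=1}^{M-1} r_j log (1 - ((z_j-1)/(z_j+1))^{r_j})| ≤ Υ M`. -/
theorem antipodal_correction_bound :
    ∀ A : ℝ, 1 ≤ A → ∃ Υ : ℝ, 0 < Υ ∧
    ∀ M : ℕ, 2 ≤ M →
    ∀ r : ℕ → ℕ,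
    (∀ j, 1 ≤ j → j ≤ M → 1 ≤ r j) →
    (∀ j, 1 ≤ j → j ≤ M → (j : ℝ) / A ≤ (r j : ℝ) ∧ (r j : ℝ) ≤ A * j) →
    ∀ D : ℝ, D = 1 + 2 * (∑ k ∈ Finset.Icc 1 (M-1), (r k : ℝ)) + (r M : ℝ) →
    ∀ z : ℕ → ℝ,
    (∀ j, 1 ≤ j → j ≤ M →
      z j = 1 - (1 + (r j : ℝ) + 2 * ∑ k ∈ Finset.Ico 1 j, (r k : ℝ)) / D) →
    |∑ j ∈ Finset.Icc 1 (M-1), (r j : ℝ) * Real.log (1 - ((z j - 1)/(z j + 1))^(r j))|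
      ≤ Υ * M := by
  intro A hA
  set q := exp (-(8 * A ^ 3)⁻¹)
  have hq₀ : 0 < q := exp_pos _
  have hq₁ : q < 1 := exp_lt_one_iff.2 (by simp only [neg_lt_zero]; positivity)
  refine ⟨2 * A / (1 - q) ^ 2, div_pos (by linarith) (by nlinarith), ?_⟩
  intro M hM r _ hr D hD z hz
  have hDM : D = cumulativeWeight r M := by
    rw [hD, cumulativeWeight, Icc_sub_one_right_eq_Ico_of_not_isMin (by simp; omega)]; ring
  calc |∑ j ∈ Icc 1 (M - 1), (r j : ℝ) * log (1 - ((z j - 1) / (z j + 1)) ^ r j)|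
      ≤ ∑ j ∈ Icc 1 (M - 1), (r j : ℝ) * |log (1 - ((z j - 1) / (z j + 1)) ^ r j)| := by
        simpa only [abs_mul, Nat.abs_cast] using abs_sum_le_sum_abs
          (fun j => (r j : ℝ) * log (1 - ((z j - 1) / (z j + 1)) ^ r j)) (Icc 1 (M - 1))
    _ ≤ ∑ j ∈ Icc 1 (M - 1), A * M * (q ^ min j (M - j) / (1 - q)) := by
        refine sum_le_sum fun j hj => ?_
        obtain ⟨hj, hjM⟩ := mem_Icc.1 hj
        rw [hz j hj (by omega), hDM]
        refine mul_le_mul ?_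
          (cumulativeWeight.abs_log_one_sub_antipodal_pow_le hA hr hj (by omega))
          (abs_nonneg _) (by positivity)
        calc (r j : ℝ) ≤ A * j := (hr j hj (by omega)).2
          _ ≤ A * M := by gcongr; omega
    _ = A * M / (1 - q) * ∑ j ∈ Icc 1 (M - 1), q ^ min j (M - j) := by
        rw [mul_sum]; congr 1; ext j; ring
    _ ≤ A * M / (1 - q) * (2 * (1 - q)⁻¹) :=
        mul_le_mul_of_nonneg_left (sum_Icc_pow_min_sub_le hq₀ hq₁ M)
          (div_nonneg (by positivity) (by linarith))
    _ = 2 * A / (1 - q) ^ 2 * M := by field_simp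
end
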